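/- Let n ≥ 2 and let h be an n×n real symmetric matrix satisfying h i j = 0 whenever i ≠ j and both i, j lie among the first n−1 indices, and h i i > 0 for every i among the first n−1 indices. Assume det h = 0. Then the kernel {ξ ∈ ℝⁿ : h ξ = 0} is the one-dimensional subspace spanned by the vector v defined by v i = −(h i n)/(h i i) for i < n and v n = 1. In particular, 0 is an eigenvalue of h of geometric multiplicity one. -/
import Mathlib


/-- Multiplicity one: the kernel of a singular "arrowhead" symmetric matrix with
positive diagonal among the first `n - 1` indices is the line spanned by the
explicit vector `v`, so `0` is an eigenvalue of geometric multiplicity one. -/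
theorem stmt_2 (n : ℕ) (hn : 2 ≤ n) (h : Matrix (Fin n) (Fin n) ℝ)
    (hsymm : ∀ i j : Fin n, h i j = h j i)
    (hdiag : ∀ i j : Fin n, i ≠ j → (i : ℕ) < n - 1 → (j : ℕ) < n - 1 → h i j = 0)
    (hpos : ∀ i : Fin n, (i : ℕ) < n - 1 → 0 < h i i)
    (hdet : h.det = 0) :
    {ξ : Fin n → ℝ | h.mulVec ξ = 0} =
      ↑(Submodule.span ℝ
        {fun i : Fin n =>
          if (i : ℕ) < n - 1 then -(h i ⟨n - 1, by omega⟩) / h i i else 1}) ∧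
    Module.finrank ℝ (LinearMap.ker h.mulVecLin) = 1 := by
  set e : Fin n := ⟨n - 1, by omega⟩ with he
  set v : Fin n → ℝ := fun i : Fin n =>
      if (i : ℕ) < n - 1 then -(h i e) / h i i else 1 with hv
  -- every index other than `e` has value `< n - 1`
  have hlt : ∀ j : Fin n, j ≠ e → (j : ℕ) < n - 1 := by
    intro j hj
    have h1 : (j : ℕ) < n := j.isLt
    have h2 : (j : ℕ) ≠ n - 1 := fun hc => hj (Fin.ext hc)
    omega
  -- key row equation
  have key : ∀ ξ : Fin n → ℝ, h.mulVec ξ = 0 → ∀ i : Fin n, (i : ℕ) < n - 1 →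
      h i i * ξ i + h i e * ξ e = 0 := by
    intro ξ hξ i hi
    have hie : i ≠ e := by
      intro hc; rw [hc] at hi; simp [he] at hi
    have h0 : ∑ j, h i j * ξ j = 0 := by
      have := congrFun hξ i
      simpa [Matrix.mulVec, dotProduct] using this
    have hsum : ∑ j, h i j * ξ j = h i i * ξ i + h i e * ξ e := by
      rw [← Finset.sum_subset (Finset.subset_univ ({i, e} : Finset (Fin n)))]
      · rw [Finset.sum_pair hie]
      · intro j _ hj
        simp only [Finset.mem_insert, Finset.mem_singleton, not_or] at hj
        have := hdiag i j (Ne.symm hj.1) hi (hlt j hj.2)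
        rw [this, zero_mul]
    rw [hsum] at h0; exact h0
  -- any kernel vector is `ξ e • v`
  have kerscal : ∀ ξ : Fin n → ℝ, h.mulVec ξ = 0 → ξ = ξ e • v := by
    intro ξ hξ
    funext i
    by_cases hi : (i : ℕ) < n - 1
    · have hk := key ξ hξ i hi
      have hne : h i i ≠ 0 := ne_of_gt (hpos i hi)
      simp only [hv, Pi.smul_apply, smul_eq_mul, if_pos hi]
      field_simp
      linarith
    · have : i = e := by
        by_contra hc
        exact hi (hlt i hc)
      simp [this, hv, he]
  -- v is in the kernel
  obtain ⟨ξ₀, hξ₀ne, hξ₀⟩ := (Matrix.exists_mulVec_eq_zero_iff).2 hdet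
  have hc0 : ξ₀ e ≠ 0 := by
    intro hc
    apply hξ₀ne
    have := kerscal ξ₀ hξ₀
    rw [hc, zero_smul] at this
    exact this
  have hveq : v = (ξ₀ e)⁻¹ • ξ₀ := by
    have h1 := kerscal ξ₀ hξ₀
    rw [eq_comm]
    calc (ξ₀ e)⁻¹ • ξ₀ = (ξ₀ e)⁻¹ • (ξ₀ e • v) := by rw [← h1]
      _ = v := by rw [smul_smul, inv_mul_cancel₀ hc0, one_smul]
  have hvker : h.mulVec v = 0 := by
    rw [hveq, Matrix.mulVec_smul, hξ₀, smul_zero]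
  have hvne : v ≠ 0 := by
    intro hc
    have : v e = 0 := by rw [hc]; rfl
    simp [hv, he] at this
  -- set equality
  have hset : {ξ : Fin n → ℝ | h.mulVec ξ = 0} = ↑(Submodule.span ℝ ({v} : Set (Fin n → ℝ))) := by
    ext ξ
    simp only [Set.mem_setOf_eq, SetLike.mem_coe, Submodule.mem_span_singleton]
    constructor
    · intro hξ
      exact ⟨ξ e, (kerscal ξ hξ).symm⟩
    · rintro ⟨c, rfl⟩
      rw [Matrix.mulVec_smul, hvker, smul_zero]
  have hker : LinearMap.ker h.mulVecLin = Submodule.span ℝ ({v} : Set (Fin n → ℝ)) := by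
    ext ξ
    have := Set.ext_iff.1 hset ξ
    simpa [LinearMap.mem_ker, Matrix.mulVecLin_apply] using this
  refine ⟨hset, ?_⟩
  rw [hker]
  exact finrank_span_singleton hvne
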